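/- Let R be a commutative ring and ξ ∈ R a nilpotent element. Then the sequence of R[[z]]-modules 0 → R[[z]] → R[[z]] → R → 0, where the first map is multiplication by (z − ξ) and the second sends a power series f(z) to f(ξ) (well-defined since ξ is nilpotent), is exact. In particular z − ξ is a non-zero-divisor in R[[z]]. -/

import Mathlib

/-!
Since `ξ ^ N = 0`, the element `X - C ξ` divides `X ^ N` (as `X ^ N = X ^ N - (C ξ) ^ N`). Hence it
inherits left regularity from `X ^ N`, and every power series is congruent modulo `X - C ξ` to its
truncation below degree `N`, a polynomial. Evaluating that truncation at `ξ` is exactly `f(ξ)`, and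
a polynomial is divisible by `X - C ξ` iff it vanishes at `ξ`.
-/

open PowerSeries

theorem sub_dvd_pow_of_pow_eq_zero {A : Type*} [CommRing A] {a b : A} {N : ℕ} (hb : b ^ N = 0) :
    a - b ∣ a ^ N := by
  simpa [hb] using sub_dvd_pow_sub_pow a b N

namespace PowerSeries

variable {R : Type*} [CommRing R] {ξ : R} {N : ℕ}

theorem eval_trunc_eq_sum_range (f : R⟦X⟧) :
    (trunc N f).eval ξ = ∑ i ∈ Finset.range N, coeff i f * ξ ^ i := by
  simpa using eval₂_trunc_eq_sum_range ξ (RingHom.id R) N f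

theorem X_sub_C_dvd_X_pow (hξ : ξ ^ N = 0) : (X - C ξ : R⟦X⟧) ∣ X ^ N :=
  sub_dvd_pow_of_pow_eq_zero (by rw [← map_pow, hξ, map_zero])

theorem isLeftRegular_X_sub_C (hξ : ξ ^ N = 0) : IsLeftRegular (X - C ξ : R⟦X⟧) := by
  obtain ⟨u, hu⟩ := X_sub_C_dvd_X_pow hξ
  have hX : IsLeftRegular (X ^ N : R⟦X⟧) := IsLeftRegular.pow N X_mul_injective
  rw [hu, mul_comm] at hX
  exact hX.of_mul

theorem eval_trunc_coe_of_pow_eq_zero (hξ : ξ ^ N = 0) (p : Polynomial R) :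
    (trunc N (p : R⟦X⟧)).eval ξ = p.eval ξ := by
  obtain ⟨q, hq⟩ : Polynomial.X ^ N ∣ trunc N (p : R⟦X⟧) - p := by
    refine Polynomial.X_pow_dvd_iff.2 fun d hd => ?_
    simp [coeff_trunc, hd]
  rw [← sub_eq_zero, ← Polynomial.eval_sub, hq, Polynomial.eval_mul, Polynomial.eval_pow,
    Polynomial.eval_X, hξ, zero_mul]

theorem X_sub_C_dvd_iff_eval_trunc_eq_zero (hξ : ξ ^ N = 0) (f : R⟦X⟧) :
    X - C ξ ∣ f ↔ (trunc N f).eval ξ = 0 := by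
  constructor
  · rintro ⟨g, rfl⟩
    have hcoe : (X - C ξ) * (trunc N g : R⟦X⟧)
        = (((Polynomial.X - Polynomial.C ξ) * trunc N g : Polynomial R) : R⟦X⟧) := by
      push_cast; rfl
    rw [← trunc_mul_trunc, hcoe, eval_trunc_coe_of_pow_eq_zero hξ]
    simp
  · intro hf
    have htrunc : X - C ξ ∣ (trunc N f : R⟦X⟧) := by
      simpa using map_dvd Polynomial.coeToPowerSeries.ringHom (Polynomial.dvd_iff_isRoot.2 hf)
    rw [eq_X_pow_mul_shift_add_trunc N f]
    exact dvd_add (dvd_mul_of_dvd_left (X_sub_C_dvd_X_pow hξ) _) htrunc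

end PowerSeries

/-- Let `R` be a commutative ring and `ξ ∈ R` nilpotent
(`ξ^N = 0`).  The sequence of `R[[z]]`-modules
`0 → R[[z]] → R[[z]] → R → 0`, where the first map is multiplication by
`z − ξ` and the second sends `f(z)` to `f(ξ)` (a finite sum since `ξ` is
nilpotent), is exact.  In particular `z − ξ` is a non-zero-divisor in
`R[[z]]`. -/
theorem stmt8 (R : Type*) [CommRing R] (ξ : R) (N : ℕ) (hξ : ξ ^ N = 0)
    (ev : PowerSeries R → R)
    (hev : ∀ f, ev f = ∑ i ∈ Finset.range N, PowerSeries.coeff i f * ξ ^ i) :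
    Function.Injective
      (fun f : PowerSeries R => (PowerSeries.X - PowerSeries.C ξ) * f) ∧
    Function.Surjective ev ∧
    ∀ f : PowerSeries R,
      ev f = 0 ↔ ∃ g, f = (PowerSeries.X - PowerSeries.C ξ) * g := by
  obtain rfl : ev = fun f => (trunc N f).eval ξ := funext fun f => by
    rw [hev, eval_trunc_eq_sum_range]
  refine ⟨isLeftRegular_X_sub_C hξ, fun r => ⟨C r, ?_⟩,
    fun f => (X_sub_C_dvd_iff_eval_trunc_eq_zero hξ f).symm⟩
  simpa using eval_trunc_coe_of_pow_eq_zero hξ (Polynomial.C r)
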